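/- arXiv:2208.14801 — 2 statements merged into one kernel-verified Lean document; each statement's English description precedes it below -/
import Mathlib

section
/- Let (Ω, F, P) be a probability space, let 𝒢 ⊆ F be a sub-σ-algebra, let A : Ω → [0,1] be 𝒢-measurable with E[A] = α > 0, and let (E_t)_{t≥1} be a sequence of events that are conditionally independent given 𝒢 with P(E_t | 𝒢) = A almost surely for every t. Let ν ≥ 1 be a fixed integer and define the detection time t* = ν · min{t ≥ 1 : 1_{E_t} = 1} (with t* = +∞ if no E_t occurs). Then E[t*] ≥ ν/α. -/
open MeasureTheory ProbabilityTheory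
open scoped ENNReal

private lemma prod_one_sub_expand {ι : Type*} [DecidableEq ι] (u : Finset ι) (f : ι → ℝ) :
    ∏ s ∈ u, (1 - f s) = ∑ v ∈ u.powerset, (-1 : ℝ) ^ v.card * ∏ s ∈ v, f s := by
  calc ∏ s ∈ u, (1 - f s) = ∏ s ∈ u, (-f s + 1) := by
        refine Finset.prod_congr rfl fun s _ => by ring
    _ = ∑ v ∈ u.powerset, (∏ s ∈ v, -f s) * ∏ s ∈ u \ v, (1 : ℝ) :=
        Finset.prod_add _ _ u
    _ = ∑ v ∈ u.powerset, (-1 : ℝ) ^ v.card * ∏ s ∈ v, f s := by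
        refine Finset.sum_congr rfl fun v _ => ?_
        simp only [Finset.prod_const_one, mul_one]
        rw [show (fun s => -f s) = fun s => (-1 : ℝ) * f s from funext fun s => by ring,
          Finset.prod_mul_distrib, Finset.prod_const]

/-- Proposition 2 of the paper: the per-batch alarm events `(E_t)_{t≥1}` are
conditionally independent given a sub-σ-algebra `𝒢` (representing the training
set), with conditional probability `P(E_t | 𝒢) = A` for a `𝒢`-measurable
`A : Ω → [0,1]`; conditional independence together with
`P(E_t | 𝒢) = A` is expressed by the factorization
`P(⋂_{t ∈ s} E_t | 𝒢) = A^{|s|}` for every finite set of indices `s`.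
If `E[A] = α > 0` and each batch consists of `ν` samples, then the detection
time `t* = ν · min{t ≥ 1 : 1_{E_t} = 1}` (with `t* = ∞` if no alarm occurs)
satisfies `ARL_0 = E[t*] ≥ ν/α`. -/
theorem arl0_ge_of_condIndep_batches
    {Ω : Type*} (𝒢 : MeasurableSpace Ω) [mΩ : MeasurableSpace Ω] (P : Measure Ω) [IsProbabilityMeasure P]
    (h𝒢 : 𝒢 ≤ mΩ)
    (E : ℕ → Set Ω) (hE : ∀ t, MeasurableSet (E t))
    (A : Ω → ℝ) (hAmeas : Measurable[𝒢] A)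
    (hA01 : ∀ ω, 0 ≤ A ω ∧ A ω ≤ 1)
    (α : ℝ) (hα : 0 < α) (hmean : ∫ ω, A ω ∂P = α)
    (hcondprob : ∀ t, 1 ≤ t →
      (P[Set.indicator (E t) (fun _ => (1 : ℝ)) | 𝒢]) =ᵐ[P] A)
    (hcondindep : ∀ s : Finset ℕ, (∀ t ∈ s, 1 ≤ t) →
      (P[Set.indicator (⋂ t ∈ s, E t) (fun _ => (1 : ℝ)) | 𝒢])
        =ᵐ[P] fun ω => A ω ^ s.card)
    (ν : ℕ) (hν : 1 ≤ ν)
    (tstar : Ω → ℝ≥0∞)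
    (htstar : ∀ ω, tstar ω
      = (ν : ℝ≥0∞) * ⨅ t ∈ {t : ℕ | 1 ≤ t ∧ ω ∈ E t}, (t : ℝ≥0∞)) :
    ENNReal.ofReal (ν / α) ≤ ∫⁻ ω, tstar ω ∂P := by
  classical
  have hAm : Measurable[mΩ] A := hAmeas.mono h𝒢 le_rfl
  have hEm : ∀ t, MeasurableSet[mΩ] (E t) := fun t => hE t
  have hbd : ∀ (f : Ω → ℝ), Measurable[mΩ] f → (∀ ω, |f ω| ≤ 1) → Integrable f P := by
    intro f hf hb
    refine ⟨hf.aestronglyMeasurable, ?_⟩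
    exact HasFiniteIntegral.of_bounded (C := 1) (ae_of_all _ fun ω => by
      simpa [Real.norm_eq_abs] using hb ω)
  have habs : ∀ ω, |A ω| ≤ 1 := fun ω =>
    abs_le.2 ⟨by linarith [(hA01 ω).1], (hA01 ω).2⟩
  have hpow_int : ∀ k : ℕ, Integrable (fun ω => A ω ^ k) P := fun k =>
    hbd _ (hAm.pow_const k) fun ω => by
      rw [abs_pow]; exact pow_le_one₀ (abs_nonneg _) (habs ω)
  have hind_int : ∀ s : Set Ω, MeasurableSet[mΩ] s →
      Integrable (s.indicator (fun _ => (1 : ℝ))) P := fun s hs =>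
    (integrable_const (1 : ℝ)).indicator hs
  -- integral of indicator of intersections equals integral of A^card
  have hI : ∀ v : Finset ℕ, (∀ t ∈ v, 1 ≤ t) →
      ∫ ω, Set.indicator (⋂ t ∈ v, E t) (fun _ => (1 : ℝ)) ω ∂P
        = ∫ ω, A ω ^ v.card ∂P := by
    intro v hv
    have hm : MeasurableSet[mΩ] (⋂ t ∈ v, E t) :=
      MeasurableSet.biInter v.countable_toSet fun t _ => hEm t
    calc ∫ ω, Set.indicator (⋂ t ∈ v, E t) (fun _ => (1 : ℝ)) ω ∂P
        = ∫ ω, (P[Set.indicator (⋂ t ∈ v, E t) (fun _ => (1 : ℝ)) | 𝒢]) ω ∂P :=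
          (integral_condExp h𝒢).symm
      _ = ∫ ω, A ω ^ v.card ∂P := integral_congr_ae (hcondindep v hv)
  set G : ℕ → Set Ω := fun t => ⋂ s ∈ Finset.Icc 1 t, (E s)ᶜ with hG
  have hGmeas : ∀ t, MeasurableSet[mΩ] (G t) := fun t =>
    MeasurableSet.biInter (Finset.Icc 1 t).countable_toSet fun s _ => (hEm s).compl
  -- real computation
  have hreal : ∀ t : ℕ,
      ∫ ω, Set.indicator (G t) (fun _ => (1 : ℝ)) ω ∂P = ∫ ω, (1 - A ω) ^ t ∂P := by
    intro t
    set u := Finset.Icc 1 t with hu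
    have hucard : u.card = t := by simp [hu]
    have hpt : ∀ ω, Set.indicator (G t) (fun _ => (1 : ℝ)) ω
        = ∑ v ∈ u.powerset, (-1 : ℝ) ^ v.card
            * Set.indicator (⋂ s ∈ v, E s) (fun _ => (1 : ℝ)) ω := by
      intro ω
      have e2 : ∀ v : Finset ℕ,
          Set.indicator (⋂ s ∈ v, E s) (fun _ => (1 : ℝ)) ω
            = ∏ s ∈ v, Set.indicator (E s) (fun _ => (1 : ℝ)) ω := by
        intro v
        by_cases h : ω ∈ ⋂ s ∈ v, E s
        · rw [Set.indicator_of_mem h]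
          simp only [Set.mem_iInter] at h
          rw [Finset.prod_congr rfl fun s hs => Set.indicator_of_mem (h s hs) _,
            Finset.prod_const_one]
        · rw [Set.indicator_of_notMem h]
          simp only [Set.mem_iInter, not_forall] at h
          obtain ⟨s₀, hs₀, hωs₀⟩ := h
          exact (Finset.prod_eq_zero hs₀ (Set.indicator_of_notMem hωs₀ _)).symm
      have e1 : Set.indicator (G t) (fun _ => (1 : ℝ)) ω
          = ∏ s ∈ u, (1 - Set.indicator (E s) (fun _ => (1 : ℝ)) ω) := by
        by_cases h : ω ∈ G t
        · rw [Set.indicator_of_mem h]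
          simp only [hG, Set.mem_iInter, Set.mem_compl_iff] at h
          rw [Finset.prod_congr rfl
            (fun s hs => by rw [Set.indicator_of_notMem (h s hs) _, sub_zero]),
            Finset.prod_const_one]
        · rw [Set.indicator_of_notMem h]
          simp only [hG, Set.mem_iInter, Set.mem_compl_iff, not_forall, not_not] at h
          obtain ⟨s₀, hs₀, hωs₀⟩ := h
          exact (Finset.prod_eq_zero hs₀
            (by rw [Set.indicator_of_mem hωs₀ _, sub_self])).symm
      rw [e1, prod_one_sub_expand]
      exact Finset.sum_congr rfl fun v _ => by rw [e2]
    calc ∫ ω, Set.indicator (G t) (fun _ => (1 : ℝ)) ω ∂P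
        = ∫ ω, ∑ v ∈ u.powerset, (-1 : ℝ) ^ v.card
            * Set.indicator (⋂ s ∈ v, E s) (fun _ => (1 : ℝ)) ω ∂P :=
          integral_congr_ae (ae_of_all _ hpt)
      _ = ∑ v ∈ u.powerset, ∫ ω, (-1 : ℝ) ^ v.card
            * Set.indicator (⋂ s ∈ v, E s) (fun _ => (1 : ℝ)) ω ∂P := by
          refine integral_finset_sum _ fun v _ => ?_
          exact (hind_int _ (MeasurableSet.biInter v.countable_toSet fun s _ => hEm s)).const_mul _
      _ = ∑ v ∈ u.powerset, (-1 : ℝ) ^ v.card * ∫ ω, A ω ^ v.card ∂P := by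
          refine Finset.sum_congr rfl fun v hv => ?_
          rw [integral_const_mul, hI v fun s hs => (Finset.mem_Icc.1
            ((Finset.mem_powerset.1 hv) hs)).1]
      _ = ∑ v ∈ u.powerset, ∫ ω, (-1 : ℝ) ^ v.card * A ω ^ v.card ∂P := by
          refine Finset.sum_congr rfl fun v _ => (integral_const_mul _ _).symm
      _ = ∫ ω, ∑ v ∈ u.powerset, (-1 : ℝ) ^ v.card * A ω ^ v.card ∂P := by
          refine (integral_finset_sum _ fun v _ => ?_).symm
          exact ((hpow_int v.card).const_mul _)
      _ = ∫ ω, (1 - A ω) ^ t ∂P := by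
          have hpt3 : ∀ ω : Ω, ∑ v ∈ u.powerset, (-1 : ℝ) ^ v.card * A ω ^ v.card
              = (1 - A ω) ^ t := by
            intro ω
            rw [← hucard, ← Finset.prod_const (1 - A ω), prod_one_sub_expand]
            exact Finset.sum_congr rfl fun v _ => by rw [Finset.prod_const]
          exact integral_congr_ae (ae_of_all _ hpt3)
  -- measure of G t
  have h1A_nonneg : ∀ ω, (0 : ℝ) ≤ 1 - A ω := fun ω => by linarith [(hA01 ω).2]
  have hPG : ∀ t : ℕ, P (G t) = ∫⁻ ω, ENNReal.ofReal (1 - A ω) ^ t ∂P := by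
    intro t
    have hint : Integrable (fun ω => (1 - A ω) ^ t) P :=
      hbd _ ((measurable_const.sub hAm).pow_const t) fun ω => by
        rw [abs_pow]
        refine pow_le_one₀ (abs_nonneg _) (abs_le.2 ⟨?_, ?_⟩) <;>
          [linarith [(hA01 ω).2]; linarith [(hA01 ω).1]]
    have h2 : (P (G t)).toReal = ∫ ω, (1 - A ω) ^ t ∂P := by
      rw [← hreal t]
      have h6 := @integral_indicator_const Ω ℝ mΩ _ _ P _ (1 : ℝ) (G t) (hGmeas t)
      rw [h6, smul_eq_mul, mul_one]; rfl
    calc P (G t) = ENNReal.ofReal ((P (G t)).toReal) :=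
          (ENNReal.ofReal_toReal (measure_ne_top P _)).symm
      _ = ENNReal.ofReal (∫ ω, (1 - A ω) ^ t ∂P) := by rw [h2]
      _ = ∫⁻ ω, ENNReal.ofReal ((1 - A ω) ^ t) ∂P :=
          ofReal_integral_eq_lintegral_ofReal hint
            (ae_of_all _ fun ω => pow_nonneg (h1A_nonneg ω) t)
      _ = ∫⁻ ω, ENNReal.ofReal (1 - A ω) ^ t ∂P := by
          refine lintegral_congr fun ω => ENNReal.ofReal_pow (h1A_nonneg ω) t
  -- pointwise bound: partial sums of indicators are ≤ the hitting time
  set T : Ω → ℝ≥0∞ := fun ω => ⨅ t ∈ {t : ℕ | 1 ≤ t ∧ ω ∈ E t}, (t : ℝ≥0∞) with hT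
  have hpt2 : ∀ (N : ℕ) (ω : Ω),
      ∑ t ∈ Finset.range N, Set.indicator (G t) (fun _ => (1 : ℝ≥0∞)) ω ≤ T ω := by
    intro N ω
    have hsum : ∑ t ∈ Finset.range N, Set.indicator (G t) (fun _ => (1 : ℝ≥0∞)) ω
        = (((Finset.range N).filter (fun t => ω ∈ G t)).card : ℝ≥0∞) := by
      rw [← Finset.sum_boole]
      exact Finset.sum_congr rfl fun t _ => by
        by_cases h : ω ∈ G t <;> simp [h]
    rw [hsum, hT]
    refine le_iInf₂ fun s hs => ?_
    obtain ⟨hs1, hsE⟩ := hs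
    have hsub : (Finset.range N).filter (fun t => ω ∈ G t) ⊆ Finset.range s := by
      intro t ht
      rw [Finset.mem_filter] at ht
      rw [Finset.mem_range]
      by_contra hc
      push_neg at hc
      have h7 := ht.2
      simp only [hG, Set.mem_iInter, Set.mem_compl_iff] at h7
      exact h7 s (Finset.mem_Icc.2 ⟨hs1, hc⟩) hsE
    exact_mod_cast Nat.cast_le.2 (le_trans (Finset.card_le_card hsub) (by simp))
  -- lower bound on the lintegral of tstar
  have hBcmeas : Measurable[mΩ] fun ω => ENNReal.ofReal (1 - A ω) :=
    (measurable_const.sub hAm).ennreal_ofReal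
  have hmain : ∀ N : ℕ, (ν : ℝ≥0∞) * ∑ t ∈ Finset.range N, P (G t) ≤ ∫⁻ ω, tstar ω ∂P := by
    intro N
    have h3 : ∑ t ∈ Finset.range N, P (G t)
        = ∫⁻ ω, ∑ t ∈ Finset.range N, Set.indicator (G t) (fun _ => (1 : ℝ≥0∞)) ω ∂P := by
      rw [lintegral_finset_sum _ fun t _ => measurable_const.indicator (hGmeas t)]
      exact (Finset.sum_congr rfl fun t _ => (lintegral_indicator_one (hGmeas t)).symm)
    rw [h3, ← lintegral_const_mul _ (by
      exact Finset.measurable_sum _ fun t _ => measurable_const.indicator (hGmeas t))]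
    refine lintegral_mono fun ω => ?_
    rw [htstar ω]
    exact mul_le_mul_right (hpt2 N ω) _
  have htsum : (ν : ℝ≥0∞) * ∑' t : ℕ, P (G t) ≤ ∫⁻ ω, tstar ω ∂P := by
    rw [ENNReal.tsum_eq_iSup_nat, ENNReal.mul_iSup]
    exact iSup_le hmain
  -- compute the tsum
  have hgeom : ∑' t : ℕ, P (G t) = ∫⁻ ω, (ENNReal.ofReal (A ω))⁻¹ ∂P := by
    calc ∑' t : ℕ, P (G t) = ∑' t : ℕ, ∫⁻ ω, ENNReal.ofReal (1 - A ω) ^ t ∂P := by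
          exact tsum_congr hPG
      _ = ∫⁻ ω, ∑' t : ℕ, ENNReal.ofReal (1 - A ω) ^ t ∂P :=
          (lintegral_tsum (μ := P) fun t => (hBcmeas.pow_const t).aemeasurable).symm
      _ = ∫⁻ ω, (ENNReal.ofReal (A ω))⁻¹ ∂P := by
          refine lintegral_congr fun ω => ?_
          rw [ENNReal.tsum_geometric]
          congr 1
          rw [show (1 : ℝ≥0∞) = ENNReal.ofReal 1 by simp,
            ← ENNReal.ofReal_sub 1 (h1A_nonneg ω)]
          norm_num
  -- lower bound the integral of 1/A via AM-GM
  set c : ℝ≥0∞ := ENNReal.ofReal α with hc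
  have hc0 : c ≠ 0 := by simp [hc, ENNReal.ofReal_eq_zero]; linarith
  have hctop : c ≠ ⊤ := ENNReal.ofReal_ne_top
  have hcinv_top : c⁻¹ ≠ ⊤ := by simp [hc0]
  have hBint : ∫⁻ ω, ENNReal.ofReal (A ω) ∂P = c := by
    rw [hc, ← hmean]
    exact (ofReal_integral_eq_lintegral_ofReal
      (hbd _ hAm habs) (ae_of_all _ fun ω => (hA01 ω).1)).symm
  have hAmGM : ∀ ω, 2 * c⁻¹ ≤ (ENNReal.ofReal (A ω))⁻¹
      + ENNReal.ofReal (A ω) * (c⁻¹ * c⁻¹) := by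
    intro ω
    by_cases h0 : A ω = 0
    · simp [h0]
    · have ha : 0 < A ω := lt_of_le_of_ne (hA01 ω).1 (Ne.symm h0)
      rw [hc, ← ENNReal.ofReal_inv_of_pos ha, ← ENNReal.ofReal_inv_of_pos hα,
        ← ENNReal.ofReal_mul (by positivity), ← ENNReal.ofReal_mul (by positivity),
        ← ENNReal.ofReal_add (by positivity) (by positivity),
        show (2 : ℝ≥0∞) = ENNReal.ofReal 2 by norm_num,
        ← ENNReal.ofReal_mul (by norm_num)]
      refine ENNReal.ofReal_le_ofReal ?_
      rw [show (2 : ℝ) * α⁻¹ = 2 / α by ring, show (A ω)⁻¹ + A ω * (α⁻¹ * α⁻¹)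
        = (A ω ^ 2 + α ^ 2) / (A ω * α ^ 2) by field_simp; ring,
        div_le_div_iff₀ hα (by positivity)]
      nlinarith [sq_nonneg (A ω - α)]
  have hinv_ge : c⁻¹ ≤ ∫⁻ ω, (ENNReal.ofReal (A ω))⁻¹ ∂P := by
    have h4 : 2 * c⁻¹ ≤ (∫⁻ ω, (ENNReal.ofReal (A ω))⁻¹ ∂P) + c⁻¹ := by
      have h5 : ∫⁻ (_ : Ω), 2 * c⁻¹ ∂P = 2 * c⁻¹ := by
        simp [lintegral_const]
      calc 2 * c⁻¹ = ∫⁻ (_ : Ω), 2 * c⁻¹ ∂P := h5.symm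
        _ ≤ ∫⁻ ω, (ENNReal.ofReal (A ω))⁻¹ + ENNReal.ofReal (A ω) * (c⁻¹ * c⁻¹) ∂P :=
            lintegral_mono hAmGM
        _ = (∫⁻ ω, (ENNReal.ofReal (A ω))⁻¹ ∂P)
            + (∫⁻ ω, ENNReal.ofReal (A ω) ∂P) * (c⁻¹ * c⁻¹) := by
            rw [lintegral_add_left (f := fun ω => (ENNReal.ofReal (A ω))⁻¹) (hAm.ennreal_ofReal.inv) _,
              lintegral_mul_const _ hAm.ennreal_ofReal]
        _ = (∫⁻ ω, (ENNReal.ofReal (A ω))⁻¹ ∂P) + c⁻¹ := by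
            rw [hBint, ← mul_assoc, ENNReal.mul_inv_cancel hc0 hctop, one_mul]
    have : c⁻¹ + c⁻¹ ≤ (∫⁻ ω, (ENNReal.ofReal (A ω))⁻¹ ∂P) + c⁻¹ := by
      rw [← two_mul]; exact h4
    exact (ENNReal.add_le_add_iff_right hcinv_top).1 this
  -- conclude
  have hfinal : ENNReal.ofReal (ν / α) = (ν : ℝ≥0∞) * c⁻¹ := by
    rw [ENNReal.ofReal_div_of_pos hα, ENNReal.ofReal_natCast, div_eq_mul_inv, hc]
  rw [hfinal]
  calc (ν : ℝ≥0∞) * c⁻¹ ≤ (ν : ℝ≥0∞) * ∑' t : ℕ, P (G t) := by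
        rw [hgeom]; exact mul_le_mul_right hinv_ge _
    _ ≤ ∫⁻ ω, tstar ω ∂P := htsum
end

section
/- Let K ≥ 2, let N > 0, and let π_1, …, π_K be positive real numbers with π_1 + … + π_K = 1. For j = 1, …, K−1 let p̃_j be independent real random variables with p̃_j distributed as Beta(π_j·N, (1 − Σ_{k=1}^{j} π_k)·N + 1), and define p_j = p̃_j · Π_{k=1}^{j−1}(1 − p̃_k) for j = 1, …, K−1 and p_K = 1 − Σ_{j=1}^{K−1} p_j. Then E[p_j] = π_j·N/(N+1) for every j = 1, …, K−1, and E[p_K] = (π_K·N + 1)/(N+1). -/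
open Finset MeasureTheory ProbabilityTheory
open scoped ENNReal

/-- The Beta distribution `Beta(a,b)` on `(0,1)`, with density
`x^{a−1}(1−x)^{b−1}·Γ(a+b)/(Γ(a)Γ(b))` with respect to Lebesgue measure. -/
noncomputable def betaMeasure (a b : ℝ) : Measure ℝ :=
  volume.withDensity fun x =>
    ENNReal.ofReal (Set.indicator (Set.Ioo (0 : ℝ) 1)
      (fun x => Real.Gamma (a + b) / (Real.Gamma a * Real.Gamma b)
        * x ^ (a - 1) * (1 - x) ^ (b - 1)) x)

open scoped NNReal

lemma real_beta (a b : ℝ) (ha : 0 < a) (hb : 0 < b) :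
    ∫ x in Set.Ioo (0:ℝ) 1, x ^ (a-1) * (1-x) ^ (b-1)
      = Real.Gamma a * Real.Gamma b / Real.Gamma (a+b) := by
  have ha' : 0 < (a:ℂ).re := by simpa using ha
  have hb' : 0 < (b:ℂ).re := by simpa using hb
  have h := Complex.Gamma_mul_Gamma_eq_betaIntegral ha' hb'
  have hI : Complex.betaIntegral a b
      = ((∫ x in (0:ℝ)..1, x ^ (a-1) * (1-x) ^ (b-1) : ℝ) : ℂ) := by
    rw [Complex.betaIntegral, ← intervalIntegral.integral_ofReal]
    apply intervalIntegral.integral_congr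
    intro x hx
    rw [Set.uIcc_of_le (by norm_num : (0:ℝ) ≤ 1)] at hx
    obtain ⟨hx0, hx1⟩ := hx
    push_cast
    rw [Complex.ofReal_cpow hx0, Complex.ofReal_cpow (by linarith : (0:ℝ) ≤ 1 - x)]
    push_cast
    ring
  rw [hI, Complex.Gamma_ofReal, Complex.Gamma_ofReal, ← Complex.ofReal_add,
    Complex.Gamma_ofReal, ← Complex.ofReal_mul, ← Complex.ofReal_mul] at h
  have h2 : Real.Gamma a * Real.Gamma b
      = Real.Gamma (a+b) * ∫ x in (0:ℝ)..1, x ^ (a-1) * (1-x) ^ (b-1) :=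
    mod_cast h
  have hpos : 0 < Real.Gamma (a+b) := Real.Gamma_pos_of_pos (by linarith)
  rw [← MeasureTheory.integral_Ioc_eq_integral_Ioo,
    ← intervalIntegral.integral_of_le (by norm_num : (0:ℝ) ≤ 1)]
  field_simp
  linarith [h2]

lemma betaMeasure_compl_Ioo (a b : ℝ) : _root_.betaMeasure a b (Set.Ioo (0:ℝ) 1)ᶜ = 0 := by
  rw [_root_.betaMeasure, withDensity_apply _ measurableSet_Ioo.compl]
  calc ∫⁻ x in (Set.Ioo (0:ℝ) 1)ᶜ,
        ENNReal.ofReal (Set.indicator (Set.Ioo (0 : ℝ) 1)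
          (fun x => Real.Gamma (a + b) / (Real.Gamma a * Real.Gamma b)
            * x ^ (a - 1) * (1 - x) ^ (b - 1)) x)
      = ∫⁻ _ in (Set.Ioo (0:ℝ) 1)ᶜ, (0 : ℝ≥0∞) := by
        apply setLIntegral_congr_fun measurableSet_Ioo.compl
        intro x hx
        beta_reduce
        rw [Set.indicator_of_notMem (by simpa using hx)]
        exact ENNReal.ofReal_zero
    _ = 0 := lintegral_zero

lemma betaMeasure_integral_eq (a b : ℝ) (ha : 0 < a) (hb : 0 < b) (g : ℝ → ℝ) :
    ∫ x, g x ∂(_root_.betaMeasure a b)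
      = ∫ x in Set.Ioo (0:ℝ) 1,
          (Real.Gamma (a + b) / (Real.Gamma a * Real.Gamma b)
            * x ^ (a - 1) * (1 - x) ^ (b - 1)) * g x := by
  set D : ℝ → ℝ := Set.indicator (Set.Ioo (0 : ℝ) 1)
      (fun x => Real.Gamma (a + b) / (Real.Gamma a * Real.Gamma b)
        * x ^ (a - 1) * (1 - x) ^ (b - 1)) with hD
  have hDmeas : Measurable D := by
    apply Measurable.indicator _ measurableSet_Ioo
    fun_prop
  have hDnn : ∀ x, 0 ≤ D x := by
    intro x
    apply Set.indicator_nonneg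
    intro y hy
    have h1 : 0 < Real.Gamma a := Real.Gamma_pos_of_pos ha
    have h2 : 0 < Real.Gamma b := Real.Gamma_pos_of_pos hb
    have h3 : 0 < Real.Gamma (a + b) := Real.Gamma_pos_of_pos (by linarith)
    have hy1 : 0 < y := hy.1
    have hy2 : 0 < 1 - y := by linarith [hy.2]
    positivity
  have h1 : _root_.betaMeasure a b = volume.withDensity (fun x => ((D x).toNNReal : ℝ≥0∞)) := rfl
  rw [h1, integral_withDensity_eq_integral_smul (by fun_prop) g]
  have h2 : ∀ x, (D x).toNNReal • g x = D x * g x := by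
    intro x
    rw [NNReal.smul_def, smul_eq_mul, Real.coe_toNNReal _ (hDnn x)]
  simp only [h2]
  rw [← MeasureTheory.integral_indicator measurableSet_Ioo]
  apply integral_congr_ae
  filter_upwards with x
  rw [hD]
  by_cases hx : x ∈ Set.Ioo (0:ℝ) 1 <;>
    simp [Set.indicator_of_mem, Set.indicator_of_notMem, hx]

lemma betaMeasure_mean (a b : ℝ) (ha : 0 < a) (hb : 0 < b) :
    ∫ x, x ∂(_root_.betaMeasure a b) = a / (a + b) := by
  rw [betaMeasure_integral_eq a b ha hb (fun x => x)]
  have hcong : ∫ x in Set.Ioo (0:ℝ) 1,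
      (Real.Gamma (a + b) / (Real.Gamma a * Real.Gamma b)
        * x ^ (a - 1) * (1 - x) ^ (b - 1)) * x
      = ∫ x in Set.Ioo (0:ℝ) 1,
        Real.Gamma (a + b) / (Real.Gamma a * Real.Gamma b)
          * (x ^ (a + 1 - 1) * (1 - x) ^ (b - 1)) := by
    apply setIntegral_congr_fun measurableSet_Ioo
    intro x hx
    simp only [show a + 1 - 1 = (a - 1) + 1 from by ring,
      Real.rpow_add_one (ne_of_gt hx.1)]
    ring
  rw [hcong, MeasureTheory.integral_const_mul, real_beta (a+1) b (by linarith) hb,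
    Real.Gamma_add_one (ne_of_gt ha), show a + 1 + b = (a + b) + 1 by ring,
    Real.Gamma_add_one (by positivity : a + b ≠ 0)]
  have h1 : 0 < Real.Gamma a := Real.Gamma_pos_of_pos ha
  have h2 : 0 < Real.Gamma b := Real.Gamma_pos_of_pos hb
  have h3 : 0 < Real.Gamma (a + b) := Real.Gamma_pos_of_pos (by linarith)
  field_simp

lemma betaMeasure_mean_one_sub (a b : ℝ) (ha : 0 < a) (hb : 0 < b) :
    ∫ x, (1 - x) ∂(_root_.betaMeasure a b) = b / (a + b) := by
  rw [betaMeasure_integral_eq a b ha hb (fun x => 1 - x)]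
  have hcong : ∫ x in Set.Ioo (0:ℝ) 1,
      (Real.Gamma (a + b) / (Real.Gamma a * Real.Gamma b)
        * x ^ (a - 1) * (1 - x) ^ (b - 1)) * (1 - x)
      = ∫ x in Set.Ioo (0:ℝ) 1,
        Real.Gamma (a + b) / (Real.Gamma a * Real.Gamma b)
          * (x ^ (a - 1) * (1 - x) ^ (b + 1 - 1)) := by
    apply setIntegral_congr_fun measurableSet_Ioo
    intro x hx
    simp only [show b + 1 - 1 = (b - 1) + 1 from by ring,
      Real.rpow_add_one (by nlinarith [hx.2] : (1:ℝ) - x ≠ 0)]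
    ring
  rw [hcong, MeasureTheory.integral_const_mul, real_beta a (b+1) ha (by linarith),
    Real.Gamma_add_one (ne_of_gt hb), show a + (b + 1) = (a + b) + 1 by ring,
    Real.Gamma_add_one (by positivity : a + b ≠ 0)]
  have h1 : 0 < Real.Gamma a := Real.Gamma_pos_of_pos ha
  have h2 : 0 < Real.Gamma b := Real.Gamma_pos_of_pos hb
  have h3 : 0 < Real.Gamma (a + b) := Real.Gamma_pos_of_pos (by linarith)
  field_simp

-- telescoping product
lemma telescope_prod (T : ℕ → ℝ) (n : ℕ) (hT : ∀ k, k ≤ n → T k ≠ 0) :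
    ∏ k ∈ Finset.range n, T (k+1) / T k = T n / T 0 := by
  induction n with
  | zero => simp [div_self (hT 0 le_rfl)]
  | succ m ih =>
    rw [Finset.prod_range_succ, ih (fun k hk => hT k (hk.trans (Nat.le_succ m)))]
    have h0 := hT 0 (Nat.zero_le _)
    have hm := hT m (Nat.le_succ m)
    field_simp

-- product over Iio in Fin n equals product over range
lemma prod_Iio_fin {M : Type*} [CommMonoid M] {n : ℕ} (j : Fin n) (g : ℕ → M) :
    ∏ k ∈ Finset.Iio j, g (k : ℕ) = ∏ k ∈ Finset.range (j : ℕ), g k := by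
  rw [show Finset.range (j:ℕ) = (Finset.Iio j).image Fin.val by
    ext k
    simp only [Finset.mem_range, Finset.mem_image, Finset.mem_Iio]
    constructor
    · intro hk
      exact ⟨⟨k, hk.trans j.isLt⟩, hk, rfl⟩
    · rintro ⟨a, ha, rfl⟩
      exact ha]
  rw [Finset.prod_image]
  intro a _ b _ hab
  exact Fin.val_injective hab

-- integral of product of independent random variables
lemma integral_finset_prod_indep {ι : Type*} {Ω : Type*} [MeasurableSpace Ω]
    (P : Measure Ω) [IsProbabilityMeasure P] (f : ι → Ω → ℝ)
    (hm : ∀ i, Measurable (f i))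
    (hi : iIndepFun f P) (s : Finset ι) :
    ∫ ω, ∏ i ∈ s, f i ω ∂P = ∏ i ∈ s, ∫ ω, f i ω ∂P := by
  classical
  induction s using Finset.induction_on with
  | empty => simp
  | @insert i s hns ih =>
    rw [Finset.prod_insert hns]
    have hIndep : IndepFun (f i) (∏ k ∈ s, f k) P :=
      (hi.indepFun_finsetProd_of_notMem hm hns).symm
    have hfun : (∏ k ∈ s, f k) = fun ω => ∏ k ∈ s, f k ω :=
      funext fun ω => Finset.prod_apply ω s f
    have hprodmeas : Measurable (fun ω => ∏ k ∈ s, f k ω) :=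
      Finset.measurable_prod _ fun k _ => hm k
    rw [hfun] at hIndep
    have key := hIndep.integral_fun_mul_eq_mul_integral (hm i).aestronglyMeasurable
      hprodmeas.aestronglyMeasurable
    simp only [Finset.prod_insert hns]
    rw [show (∫ ω, f i ω * ∏ k ∈ s, f k ω ∂P)
        = (∫ ω, f i ω ∂P) * ∫ ω, ∏ k ∈ s, f k ω ∂P from key, ih]

/-- Expected bin probabilities of a QuantTree histogram (equation (5) of the
paper): if the bin probabilities have the stick-breaking representation
`p_j = p̃_j · Π_{k<j}(1 − p̃_k)` (for the first `K−1` bins, 0-indexed) and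
`p_K = 1 − Σ_j p_j`, with independent `p̃_j ∼ Beta(π_j·N, (1 − Σ_{k≤j} π_k)·N + 1)`,
then `E[p_j] = π_j·N/(N+1)` for `j < K` and `E[p_K] = (π_K·N + 1)/(N+1)`. -/
theorem quantTree_bin_probability_mean (K : ℕ) (hK : 2 ≤ K) (N : ℝ) (hN : 0 < N)
    (π : Fin K → ℝ) (hπpos : ∀ k, 0 < π k) (hπsum : ∑ k, π k = 1)
    {Ω : Type*} [MeasurableSpace Ω] (P : Measure Ω) [IsProbabilityMeasure P]
    (ptilde : Fin (K - 1) → Ω → ℝ)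
    (hmeas : ∀ j, Measurable (ptilde j))
    (hindep : iIndepFun ptilde P)
    (hbeta : ∀ j : Fin (K - 1),
      Measure.map (ptilde j) P
        = _root_.betaMeasure (π (Fin.castLE (Nat.sub_le K 1) j) * N)
            ((1 - ∑ k ∈ Finset.univ.filter (fun k : Fin K => (k : ℕ) ≤ (j : ℕ)), π k)
              * N + 1)) :
    (∀ j : Fin (K - 1),
      ∫ ω, ptilde j ω * ∏ k ∈ Finset.Iio j, (1 - ptilde k ω) ∂P
        = π (Fin.castLE (Nat.sub_le K 1) j) * N / (N + 1)) ∧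
    ∫ ω, (1 - ∑ j : Fin (K - 1),
            ptilde j ω * ∏ k ∈ Finset.Iio j, (1 - ptilde k ω)) ∂P
      = (π ⟨K - 1, by omega⟩ * N + 1) / (N + 1) := by
  classical
  have hN1 : N + 1 ≠ 0 := by positivity
  have hlast : K - 1 < K := by omega
  -- abbreviations (as plain functions)
  have hT_pos : ∀ n, n ≤ K - 1 →
      0 < (1 - ∑ k ∈ Finset.univ.filter (fun k : Fin K => (k : ℕ) < n), π k) * N + 1 := by
    intro n hn
    have hsum_le : ∑ k ∈ Finset.univ.filter (fun k : Fin K => (k : ℕ) < n), π k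
        + π ⟨K - 1, hlast⟩ ≤ 1 := by
      rw [← hπsum]
      have hnotmem : (⟨K - 1, hlast⟩ : Fin K)
          ∉ Finset.univ.filter (fun k : Fin K => (k : ℕ) < n) := by
        simp only [Finset.mem_filter, Finset.mem_univ, true_and]
        omega
      calc ∑ k ∈ Finset.univ.filter (fun k : Fin K => (k : ℕ) < n), π k + π ⟨K - 1, hlast⟩
          = ∑ k ∈ insert (⟨K - 1, hlast⟩ : Fin K)
              (Finset.univ.filter (fun k : Fin K => (k : ℕ) < n)), π k := by
            rw [Finset.sum_insert hnotmem]; ring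
        _ ≤ ∑ k, π k := Finset.sum_le_sum_of_subset_of_nonneg (Finset.subset_univ _)
            (fun k _ _ => (hπpos k).le)
    nlinarith [hπpos ⟨K - 1, hlast⟩]
  have hT0 : (1 - ∑ k ∈ Finset.univ.filter (fun k : Fin K => (k : ℕ) < 0), π k) * N + 1
      = N + 1 := by simp
  -- filter (≤ j) = filter (< j+1), and insert identity
  have hfilter_succ : ∀ j : Fin (K - 1),
      Finset.univ.filter (fun k : Fin K => (k : ℕ) ≤ (j : ℕ))
        = Finset.univ.filter (fun k : Fin K => (k : ℕ) < (j : ℕ) + 1) := by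
    intro j; apply Finset.filter_congr; intro k _; constructor <;> (intro; omega)
  have hinsert : ∀ j : Fin (K - 1),
      Finset.univ.filter (fun k : Fin K => (k : ℕ) < (j : ℕ) + 1)
        = insert (Fin.castLE (Nat.sub_le K 1) j)
            (Finset.univ.filter (fun k : Fin K => (k : ℕ) < (j : ℕ))) := by
    intro j
    ext k
    simp only [Finset.mem_filter, Finset.mem_univ, true_and, Finset.mem_insert, Fin.ext_iff,
      Fin.coe_castLE]
    omega
  have hSsucc : ∀ j : Fin (K - 1),
      ∑ k ∈ Finset.univ.filter (fun k : Fin K => (k : ℕ) < (j : ℕ) + 1), π k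
        = π (Fin.castLE (Nat.sub_le K 1) j)
          + ∑ k ∈ Finset.univ.filter (fun k : Fin K => (k : ℕ) < (j : ℕ)), π k := by
    intro j
    rw [hinsert j, Finset.sum_insert]
    simp
  -- a.e. membership in (0,1)
  have hae : ∀ j : Fin (K - 1), ∀ᵐ ω ∂P, ptilde j ω ∈ Set.Ioo (0 : ℝ) 1 := by
    intro j
    have hc : MeasurableSet (Set.Ioo (0 : ℝ) 1)ᶜ := measurableSet_Ioo.compl
    have h0 : P (ptilde j ⁻¹' (Set.Ioo (0 : ℝ) 1)ᶜ) = 0 := by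
      rw [← Measure.map_apply (hmeas j) hc, hbeta j, betaMeasure_compl_Ioo]
    rw [ae_iff]
    exact h0
  -- mean of ptilde j
  have hmean : ∀ j : Fin (K - 1), ∫ ω, ptilde j ω ∂P
      = π (Fin.castLE (Nat.sub_le K 1) j) * N
        / ((1 - ∑ k ∈ Finset.univ.filter (fun k : Fin K => (k : ℕ) < (j : ℕ)), π k) * N + 1) := by
    intro j
    have h1 : ∫ ω, ptilde j ω ∂P = ∫ x, x ∂(Measure.map (ptilde j) P) :=
      (integral_map (hmeas j).aemeasurable aestronglyMeasurable_id).symm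
    rw [h1, hbeta j, betaMeasure_mean _ _ (mul_pos (hπpos _) hN)
      (by rw [hfilter_succ j]; exact hT_pos ((j : ℕ) + 1) (by omega))]
    congr 1
    rw [hfilter_succ j, hSsucc j]
    ring
  have hmean1 : ∀ j : Fin (K - 1), ∫ ω, (1 - ptilde j ω) ∂P
      = ((1 - ∑ k ∈ Finset.univ.filter (fun k : Fin K => (k : ℕ) < (j : ℕ) + 1), π k) * N + 1)
        / ((1 - ∑ k ∈ Finset.univ.filter (fun k : Fin K => (k : ℕ) < (j : ℕ)), π k) * N + 1) := by
    intro j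
    have h1 : ∫ ω, (1 - ptilde j ω) ∂P = ∫ x, (1 - x) ∂(Measure.map (ptilde j) P) :=
      (integral_map (hmeas j).aemeasurable
        (aestronglyMeasurable_const.sub aestronglyMeasurable_id)).symm
    rw [h1, hbeta j, betaMeasure_mean_one_sub _ _ (mul_pos (hπpos _) hN)
      (by rw [hfilter_succ j]; exact hT_pos ((j : ℕ) + 1) (by omega))]
    rw [hfilter_succ j]
    congr 1
    rw [hSsucc j]
    ring
  -- Part 1
  have part1 : ∀ j : Fin (K - 1),
      ∫ ω, ptilde j ω * ∏ k ∈ Finset.Iio j, (1 - ptilde k ω) ∂P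
        = π (Fin.castLE (Nat.sub_le K 1) j) * N / (N + 1) := by
    intro j
    set f' : Fin (K - 1) → Ω → ℝ :=
      fun k ω => if k = j then ptilde k ω else 1 - ptilde k ω with hf'
    have hgm : ∀ k : Fin (K - 1), Measurable (fun x : ℝ => if k = j then x else 1 - x) := by
      intro k
      by_cases h : k = j
      · simp only [if_pos h]; exact measurable_id
      · simp only [if_neg h]; exact measurable_const.sub measurable_id
    have hf'm : ∀ k, Measurable (f' k) := fun k => (hgm k).comp (hmeas k)
    have hf'indep : iIndepFun f' P :=
      hindep.comp (fun k x => if k = j then x else 1 - x) hgm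
    have hIndep : IndepFun (f' j) (∏ k ∈ Finset.Iio j, f' k) P :=
      (hf'indep.indepFun_finsetProd_of_notMem hf'm (by simp)).symm
    have hfun : (∏ k ∈ Finset.Iio j, f' k) = fun ω => ∏ k ∈ Finset.Iio j, f' k ω :=
      funext fun ω => Finset.prod_apply ω _ f'
    rw [hfun] at hIndep
    have hprodmeas : Measurable (fun ω => ∏ k ∈ Finset.Iio j, f' k ω) :=
      Finset.measurable_prod _ fun k _ => hf'm k
    have key := hIndep.integral_fun_mul_eq_mul_integral (hf'm j).aestronglyMeasurable
      hprodmeas.aestronglyMeasurable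
    have hLHS : ∫ ω, ptilde j ω * ∏ k ∈ Finset.Iio j, (1 - ptilde k ω) ∂P
        = ∫ ω, f' j ω * ∏ k ∈ Finset.Iio j, f' k ω ∂P := by
      apply integral_congr_ae
      filter_upwards with ω
      rw [show f' j ω = ptilde j ω from if_pos rfl]
      congr 1
      exact (Finset.prod_congr rfl fun k hk =>
        (if_neg (ne_of_lt (Finset.mem_Iio.mp hk)))).symm
    rw [hLHS, key, integral_finset_prod_indep P f' hf'm hf'indep (Finset.Iio j)]
    have hprod : ∏ k ∈ Finset.Iio j, ∫ ω, f' k ω ∂P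
        = ∏ k ∈ Finset.Iio j,
            (((1 - ∑ m ∈ Finset.univ.filter (fun m : Fin K => (m : ℕ) < (k : ℕ) + 1), π m) * N + 1)
              / ((1 - ∑ m ∈ Finset.univ.filter (fun m : Fin K => (m : ℕ) < (k : ℕ)), π m) * N + 1)) := by
      apply Finset.prod_congr rfl
      intro k hk
      have hkj : k ≠ j := ne_of_lt (Finset.mem_Iio.mp hk)
      have : ∫ ω, f' k ω ∂P = ∫ ω, (1 - ptilde k ω) ∂P := by
        apply integral_congr_ae
        filter_upwards with ω
        rw [show f' k ω = 1 - ptilde k ω from if_neg hkj]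
      rw [this, hmean1 k]
    have hf'j : ∫ ω, f' j ω ∂P = ∫ ω, ptilde j ω ∂P := by
      apply integral_congr_ae
      filter_upwards with ω
      rw [show f' j ω = ptilde j ω from if_pos rfl]
    rw [hprod, hf'j, hmean j]
    rw [prod_Iio_fin j (fun n =>
      ((1 - ∑ m ∈ Finset.univ.filter (fun m : Fin K => (m : ℕ) < n + 1), π m) * N + 1)
        / ((1 - ∑ m ∈ Finset.univ.filter (fun m : Fin K => (m : ℕ) < n), π m) * N + 1))]
    rw [telescope_prod
      (fun n => (1 - ∑ m ∈ Finset.univ.filter (fun m : Fin K => (m : ℕ) < n), π m) * N + 1)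
      (j : ℕ) (fun k hk => ne_of_gt (hT_pos k (by omega)))]
    rw [hT0]
    have hTj := hT_pos (j : ℕ) (by omega)
    field_simp
    rw [mul_div_assoc, div_self (ne_of_gt (by linarith)), mul_one]
  refine ⟨part1, ?_⟩
  -- Part 2
  have hint : ∀ j : Fin (K - 1),
      Integrable (fun ω => ptilde j ω * ∏ k ∈ Finset.Iio j, (1 - ptilde k ω)) P := by
    intro j
    have hm : Measurable (fun ω => ptilde j ω * ∏ k ∈ Finset.Iio j, (1 - ptilde k ω)) :=
      (hmeas j).mul (Finset.measurable_prod _ fun k _ => measurable_const.sub (hmeas k))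
    apply Integrable.mono' (integrable_const (1 : ℝ)) hm.aestronglyMeasurable
    have haeall : ∀ᵐ ω ∂P, ∀ k : Fin (K - 1), ptilde k ω ∈ Set.Ioo (0 : ℝ) 1 :=
      (ae_all_iff).mpr hae
    filter_upwards [haeall] with ω hω
    have h1 : |ptilde j ω| ≤ 1 := by
      have := hω j; rw [abs_le]; constructor <;> [linarith [this.1]; linarith [this.2]]
    have h2 : |∏ k ∈ Finset.Iio j, (1 - ptilde k ω)| ≤ 1 := by
      rw [Finset.abs_prod]
      apply Finset.prod_le_one
      · intro k _; positivity
      · intro k _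
        have := hω k
        rw [abs_le]; constructor <;> [linarith [this.2]; linarith [this.1]]
    calc ‖ptilde j ω * ∏ k ∈ Finset.Iio j, (1 - ptilde k ω)‖
        = |ptilde j ω| * |∏ k ∈ Finset.Iio j, (1 - ptilde k ω)| := abs_mul _ _
      _ ≤ 1 * 1 := mul_le_mul h1 h2 (abs_nonneg _) zero_le_one
      _ = 1 := by ring
  rw [integral_sub (integrable_const 1) (integrable_finset_sum _ fun j _ => hint j),
    integral_const, integral_finset_sum _ fun j _ => hint j]
  simp only [measure_univ, ENNReal.toReal_one, probReal_univ, smul_eq_mul, mul_one, one_mul]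
  have hsum : ∑ j : Fin (K - 1), ∫ ω, ptilde j ω * ∏ k ∈ Finset.Iio j, (1 - ptilde k ω) ∂P
      = (∑ j : Fin (K - 1), π (Fin.castLE (Nat.sub_le K 1) j)) * N / (N + 1) := by
    rw [Finset.sum_congr rfl fun j _ => part1 j, ← Finset.sum_div, ← Finset.sum_mul]
  rw [hsum]
  -- ∑_{j : Fin (K-1)} π (castLE j) = 1 - π ⟨K-1⟩
  have himg : (Finset.univ : Finset (Fin (K - 1))).image (Fin.castLE (Nat.sub_le K 1))
      = Finset.univ.filter (fun k : Fin K => (k : ℕ) < K - 1) := by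
    ext k
    simp only [Finset.mem_image, Finset.mem_univ, true_and, Finset.mem_filter, Fin.ext_iff,
      Fin.coe_castLE]
    constructor
    · rintro ⟨a, ha⟩; have := a.isLt; omega
    · intro hk; exact ⟨⟨(k : ℕ), hk⟩, rfl⟩
  have hsum2 : ∑ j : Fin (K - 1), π (Fin.castLE (Nat.sub_le K 1) j)
      = ∑ k ∈ Finset.univ.filter (fun k : Fin K => (k : ℕ) < K - 1), π k := by
    rw [← himg, Finset.sum_image (fun a _ b _ h => Fin.castLE_injective _ h)]
  have huniv : (Finset.univ : Finset (Fin K))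
      = insert (⟨K - 1, hlast⟩ : Fin K)
          (Finset.univ.filter (fun k : Fin K => (k : ℕ) < K - 1)) := by
    ext k
    simp only [Finset.mem_univ, Finset.mem_insert, Finset.mem_filter, true_and, true_iff,
      Fin.ext_iff]
    have := k.isLt
    omega
  have h1 : ∑ k ∈ insert (⟨K - 1, hlast⟩ : Fin K)
      (Finset.univ.filter (fun k : Fin K => (k : ℕ) < K - 1)), π k = 1 := by
    rw [← huniv]; exact hπsum
  have hsplit : π ⟨K - 1, hlast⟩
      + ∑ k ∈ Finset.univ.filter (fun k : Fin K => (k : ℕ) < K - 1), π k = 1 := by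
    rw [← h1, Finset.sum_insert (by simp)]
  rw [hsum2]
  have : ∑ k ∈ Finset.univ.filter (fun k : Fin K => (k : ℕ) < K - 1), π k
      = 1 - π ⟨K - 1, hlast⟩ := by linarith
  rw [this]
  field_simp
  ring
end
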